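/- arXiv:1311.2236 — 2 statements merged into one kernel-verified Lean document; each statement's English description precedes it below -/
import Mathlib

section
/- Let (φ_α)_{α∈I} be a Hilbert basis of L²(Λ) (Λ a measure space) with ‖φ_α‖_∞ ≤ φ_max for all α. Let P be a probability measure on Λ with density p ∈ L²(Λ), with coefficients a_α = ∫ φ_α dP satisfying ∑_α κ_α² a_α² ≤ A for weights κ : I → ℝ_{≥0} and A > 0. Fix t > 0 with M_t = {α : κ_α ≤ t} finite. Given an i.i.d. sample X₁,…,X_n from P, let p̃ = ∑_{α∈M_t} â_α φ_α with â_α = (1/n)∑_{j=1}^n φ_α(X_j). Then E[‖p − p̃‖₂²] ≤ |M_t| φ_max² / n + A / t². -/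
open MeasureTheory ProbabilityTheory

lemma integrable_of_abs_le {Ω : Type*} [MeasurableSpace Ω] {μ : Measure Ω} [IsFiniteMeasure μ]
    {f : Ω → ℝ} (hf : AEStronglyMeasurable f μ) {C : ℝ} (h : ∀ ω, |f ω| ≤ C) :
    Integrable f μ :=
  Integrable.mono' (integrable_const C) hf (Filter.Eventually.of_forall fun ω => by
    simpa [Real.norm_eq_abs] using h ω)

lemma mean_sq_sum_le {Ω : Type*} [MeasurableSpace Ω] (μ : Measure Ω) [IsProbabilityMeasure μ]
    {n : ℕ} (hn : 0 < n) (Z : Fin n → Ω → ℝ) {C B : ℝ} (hC : 0 ≤ C)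
    (hZm : ∀ j, Measurable (Z j))
    (hbd : ∀ j ω, |Z j ω| ≤ C)
    (hvar : ∀ j, ∫ ω, (Z j ω)^2 ∂μ ≤ B)
    (hcross : ∀ j k, j ≠ k → ∫ ω, Z j ω * Z k ω ∂μ = 0) :
    ∫ ω, ((1/n : ℝ) * ∑ j, Z j ω)^2 ∂μ ≤ B / n := by
  have hn' : (n : ℝ) ≠ 0 := Nat.cast_ne_zero.mpr hn.ne'
  have hint : ∀ j k : Fin n, Integrable (fun ω => Z j ω * Z k ω) μ := fun j k =>
    integrable_of_abs_le (((hZm j).mul (hZm k)).aestronglyMeasurable) (C := C * C)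
      (fun ω => by rw [abs_mul]; exact mul_le_mul (hbd j ω) (hbd k ω) (abs_nonneg _) hC)
  have key : ∫ ω, (∑ j, Z j ω)^2 ∂μ = ∑ j : Fin n, ∫ ω, (Z j ω)^2 ∂μ := by
    have h1 : ∀ ω, (∑ j, Z j ω)^2 = ∑ j : Fin n, ∑ k : Fin n, Z j ω * Z k ω := by
      intro ω; rw [sq, Finset.sum_mul_sum]
    simp_rw [h1]
    rw [integral_finset_sum _ (fun j _ => integrable_finset_sum _ (fun k _ => hint j k))]
    refine Finset.sum_congr rfl fun j _ => ?_
    rw [integral_finset_sum _ (fun k _ => hint j k), Finset.sum_eq_single j]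
    · exact integral_congr_ae (Filter.Eventually.of_forall fun ω => (sq (Z j ω)).symm) |>.symm ▸ rfl
    · exact fun k _ hk => hcross j k (Ne.symm hk)
    · intro h; exact absurd (Finset.mem_univ j) h
  have hBnn : 0 ≤ B := le_trans (integral_nonneg fun ω => sq_nonneg _) (hvar ⟨0, hn⟩)
  calc ∫ ω, ((1/n:ℝ) * ∑ j, Z j ω)^2 ∂μ
      = (1/n:ℝ)^2 * ∫ ω, (∑ j, Z j ω)^2 ∂μ := by
        simp_rw [mul_pow]; exact integral_const_mul _ _
    _ = (1/n:ℝ)^2 * ∑ j : Fin n, ∫ ω, (Z j ω)^2 ∂μ := by rw [key]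
    _ ≤ (1/n:ℝ)^2 * (n * B) := by
        refine mul_le_mul_of_nonneg_left ?_ (by positivity)
        calc ∑ j : Fin n, ∫ ω, (Z j ω)^2 ∂μ ≤ ∑ _j : Fin n, B := Finset.sum_le_sum fun j _ => hvar j
          _ = n * B := by rw [Finset.sum_const, Finset.card_univ, Fintype.card_fin, nsmul_eq_mul]
    _ = B / n := by field_simp

lemma parseval_aux
    {Λ : Type*} [MeasurableSpace Λ] {ν : Measure Λ}
    {I : Type*} (φ : HilbertBasis I ℝ (Lp ℝ 2 ν))
    (p : Lp ℝ 2 ν) (a : I → ℝ)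
    (hacoef : ∀ α, (inner ℝ (φ α : Lp ℝ 2 ν) p : ℝ) = a α)
    [DecidableEq I] (M : Finset I)
    (hu_sum : Summable (fun α => if α ∈ M then 0 else (a α)^2))
    (cv : I → ℝ) :
    ‖p - ∑ α ∈ M, cv α • (φ α : Lp ℝ 2 ν)‖^2
      = (∑ α ∈ M, (a α - cv α)^2) + ∑' α, (if α ∈ M then 0 else (a α)^2) := by
  set u : I → ℝ := fun α => if α ∈ M then 0 else (a α)^2 with hu
  set v := p - ∑ α ∈ M, cv α • (φ α : Lp ℝ 2 ν) with hv
  have hcoef : ∀ β, φ.repr v β = a β - (if β ∈ M then cv β else 0) := by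
    intro β
    have horth := orthonormal_iff_ite.mp φ.orthonormal
    rw [HilbertBasis.repr_apply_apply, hv, inner_sub_right, inner_sum, hacoef]
    congr 1
    calc (∑ α ∈ M, (inner ℝ (φ β : Lp ℝ 2 ν) (cv α • (φ α : Lp ℝ 2 ν)) : ℝ))
        = ∑ α ∈ M, (if β = α then cv α else 0) := by
          refine Finset.sum_congr rfl fun α _ => ?_
          rw [real_inner_smul_right, horth]
          split <;> simp
      _ = if β ∈ M then cv β else 0 := Finset.sum_ite_eq M β cv
  have hnorm : ‖v‖^2 = ∑' β, (φ.repr v β)^2 := by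
    have h1 : ‖v‖ = ‖φ.repr v‖ := (φ.repr.norm_map v).symm
    have h2 := lp.norm_rpow_eq_tsum (p := 2) (by norm_num) (φ.repr v)
    have h3 : ((2:ENNReal)).toReal = ((2:ℕ):ℝ) := by simp
    rw [h3] at h2
    simp_rw [Real.rpow_natCast] at h2
    rw [h1]
    simpa [Real.norm_eq_abs, sq_abs] using h2
  have hd : ∀ β, (φ.repr v β)^2 = (if β ∈ M then (a β - cv β)^2 else 0) + u β := by
    intro β; rw [hcoef, hu]; by_cases h : β ∈ M <;> simp [h]
  have hw_sum : Summable (fun β => if β ∈ M then (a β - cv β)^2 else 0) :=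
    summable_of_ne_finset_zero (s := M) (fun β hβ => if_neg hβ)
  rw [hnorm]
  calc ∑' β, (φ.repr v β)^2
      = ∑' β, ((if β ∈ M then (a β - cv β)^2 else 0) + u β) := tsum_congr hd
    _ = (∑' β, if β ∈ M then (a β - cv β)^2 else 0) + ∑' β, u β := Summable.tsum_add hw_sum hu_sum
    _ = (∑ α ∈ M, (a α - cv α)^2) + ∑' β, u β := by
        rw [tsum_eq_sum (s := M) (fun β hβ => if_neg hβ)]
        exact congrArg (· + ∑' β, u β) (Finset.sum_congr rfl fun α hα => if_pos hα)

/-- Risk bound for the truncated projection density estimator.  With a Hilbert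
basis `(φ α)` of `L²(Λ)` uniformly bounded by `φmax`, a density `p ∈ L²` of the probability
measure `P` whose coefficients `a α = ∫ φ_α dP = ⟪φ α, p⟫` satisfy the ellipsoid condition
`∑ κ_α² a_α² ≤ A`, retained set `M_t = {α : κ α ≤ t}` finite, and the estimator
`p̃ = ∑_{α ∈ M_t} â_α • φ α` with `â_α = (1/n) ∑_j φ_α(X_j)` built from an i.i.d. sample
`X₁,…,X_n` from `P`, one has `E‖p - p̃‖² ≤ |M_t| φmax² / n + A / t²`. -/
theorem projection_density_estimator_risk_bound
    {Λ : Type*} [MeasurableSpace Λ] (ν : Measure Λ)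
    {Ω : Type*} [MeasurableSpace Ω] (μ : Measure Ω) [IsProbabilityMeasure μ]
    {I : Type*} (φ : HilbertBasis I ℝ (Lp ℝ 2 ν))
    (φmax : ℝ)
    (hφbd : ∀ α : I, ∀ x : Λ, |((φ α : Lp ℝ 2 ν) : Λ → ℝ) x| ≤ φmax)
    (P : Measure Λ) [IsProbabilityMeasure P]
    (p : Lp ℝ 2 ν) (a : I → ℝ)
    (ha : ∀ α, a α = ∫ x, ((φ α : Lp ℝ 2 ν) : Λ → ℝ) x ∂P)
    (hacoef : ∀ α, (inner ℝ (φ α : Lp ℝ 2 ν) p : ℝ) = a α)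
    (κ : I → ℝ) (hκ : ∀ α, 0 ≤ κ α) (A : ℝ) (hA : 0 < A)
    (hsum : Summable fun α => κ α ^ 2 * a α ^ 2)
    (hell : ∑' α, κ α ^ 2 * a α ^ 2 ≤ A)
    (t : ℝ) (ht : 0 < t) (hfin : {α : I | κ α ≤ t}.Finite)
    (n : ℕ) (hn : 0 < n) (X : Fin n → Ω → Λ)
    (hmeas : ∀ j, Measurable (X j))
    (hiid : iIndepFun X μ)
    (hlaw : ∀ j, Measure.map (X j) μ = P) :
    ∫ ω, ‖p - ∑ α ∈ hfin.toFinset,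
        ((1 / n : ℝ) * ∑ j, ((φ α : Lp ℝ 2 ν) : Λ → ℝ) (X j ω)) • (φ α : Lp ℝ 2 ν)‖ ^ 2 ∂μ
      ≤ hfin.toFinset.card * φmax ^ 2 / n + A / t ^ 2 := by
  classical
  set M := hfin.toFinset with hM
  have hn' : (n : ℝ) ≠ 0 := Nat.cast_ne_zero.mpr hn.ne'
  have hΛ : Nonempty Λ := by
    by_contra h
    rw [not_nonempty_iff] at h
    have h1 : P Set.univ = 1 := measure_univ
    rw [Set.univ_eq_empty_iff.mpr h, measure_empty] at h1
    exact zero_ne_one h1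
  -- the tail term
  have hu_le : ∀ α, (if α ∈ M then 0 else (a α)^2) ≤ (κ α ^ 2 * a α ^ 2) / t^2 := by
    intro α
    by_cases hα : α ∈ M
    · simp only [if_pos hα]; positivity
    · simp only [if_neg hα]
      have hκα : t < κ α := by
        by_contra hle; push_neg at hle
        exact hα (by rw [hM, Set.Finite.mem_toFinset]; exact hle)
      rw [le_div_iff₀ (by positivity : (0:ℝ) < t^2)]
      have h2 : t^2 ≤ κ α ^2 := by nlinarith
      nlinarith [mul_le_mul_of_nonneg_left h2 (sq_nonneg (a α))]
  have hu_nn : ∀ α, 0 ≤ (if α ∈ M then 0 else (a α)^2) := by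
    intro α; by_cases h : α ∈ M <;> simp [h] <;> positivity
  have hu_sum : Summable (fun α => if α ∈ M then 0 else (a α)^2) :=
    Summable.of_nonneg_of_le hu_nn hu_le (hsum.div_const _)
  have hT_le : ∑' α, (if α ∈ M then 0 else (a α)^2) ≤ A / t^2 := by
    calc ∑' α, (if α ∈ M then 0 else (a α)^2)
        ≤ ∑' α, (κ α ^ 2 * a α ^ 2) / t^2 := Summable.tsum_le_tsum hu_le hu_sum (hsum.div_const _)
      _ = (∑' α, κ α ^ 2 * a α ^ 2) / t^2 := tsum_div_const
      _ ≤ A / t^2 := by gcongr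
  set T := ∑' α, (if α ∈ M then 0 else (a α)^2) with hT
  -- pointwise Parseval identity
  have hpoint : ∀ ω, ‖p - ∑ α ∈ M,
      ((1 / n : ℝ) * ∑ j, ((φ α : Lp ℝ 2 ν) : Λ → ℝ) (X j ω)) • (φ α : Lp ℝ 2 ν)‖ ^ 2
      = (∑ α ∈ M, (a α - (1 / n : ℝ) * ∑ j, ((φ α : Lp ℝ 2 ν) : Λ → ℝ) (X j ω))^2) + T :=
    fun ω => parseval_aux φ p a hacoef M hu_sum _
  -- per-coefficient variance bound
  have hterm : ∀ α ∈ M, ∫ ω, (a α - (1 / n : ℝ) * ∑ j, ((φ α : Lp ℝ 2 ν) : Λ → ℝ) (X j ω))^2 ∂μ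
      ≤ φmax^2 / n := by
    intro α _
    set g : Λ → ℝ := ((φ α : Lp ℝ 2 ν) : Λ → ℝ) with hg
    have hgm : Measurable g := (Lp.stronglyMeasurable (φ α : Lp ℝ 2 ν)).measurable
    have hgsm : StronglyMeasurable g := Lp.stronglyMeasurable _
    have hφ0 : 0 ≤ φmax := le_trans (abs_nonneg _) (hφbd α (Classical.arbitrary Λ))
    set ζ : Λ → ℝ := fun y => g y - a α with hζ
    have hζm : Measurable ζ := hgm.sub measurable_const
    set Z : Fin n → Ω → ℝ := fun j ω => ζ (X j ω) with hZ
    have hZm : ∀ j, Measurable (Z j) := fun j => hζm.comp (hmeas j)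
    have hEg : ∀ j, ∫ ω, g (X j ω) ∂μ = a α := by
      intro j
      rw [ha, ← hlaw j, integral_map (hmeas j).aemeasurable hgsm.aestronglyMeasurable]
    have hgint : ∀ j, Integrable (fun ω => g (X j ω)) μ := fun j =>
      integrable_of_abs_le ((hgm.comp (hmeas j)).aestronglyMeasurable) (fun ω => hφbd α _)
    have hg2int : ∀ j, Integrable (fun ω => g (X j ω)^2) μ := fun j =>
      integrable_of_abs_le (((hgm.comp (hmeas j)).pow_const 2).aestronglyMeasurable)
        (C := φmax^2) (fun ω => by
          rw [abs_pow]
          exact pow_le_pow_left₀ (abs_nonneg _) (hφbd α _) 2)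
    have hmean : ∀ j, ∫ ω, Z j ω ∂μ = 0 := by
      intro j
      rw [hZ]
      simp only [hζ]
      rw [integral_sub (hgint j) (integrable_const _), hEg, integral_const]
      simp
    have haα : |a α| ≤ φmax := by
      rw [ha]
      calc |∫ x, g x ∂P| ≤ φmax * (P Set.univ).toReal := by
            rw [← Real.norm_eq_abs]
            exact norm_integral_le_of_norm_le_const
              (Filter.Eventually.of_forall fun x => by
                rw [Real.norm_eq_abs]; exact hφbd α x)
        _ = φmax := by simp
    have hbd : ∀ j ω, |Z j ω| ≤ φmax + φmax := by
      intro j ω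
      calc |Z j ω| ≤ |g (X j ω)| + |a α| := abs_sub _ _
        _ ≤ φmax + φmax := add_le_add (hφbd α _) haα
    have hvar : ∀ j, ∫ ω, (Z j ω)^2 ∂μ ≤ φmax^2 := by
      intro j
      have hsq : ∀ ω, (Z j ω)^2 = g (X j ω)^2 - (2 * a α) * g (X j ω) + a α^2 := by
        intro ω; simp only [hZ, hζ]; ring
      simp_rw [hsq]
      have hi1 : Integrable (fun ω => g (X j ω)^2 - 2 * a α * g (X j ω)) μ :=
        (hg2int j).sub ((hgint j).const_mul _)
      have hi2 : Integrable (fun ω => 2 * a α * g (X j ω)) μ := (hgint j).const_mul _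
      rw [integral_add hi1 (integrable_const _), integral_sub (hg2int j) hi2,
        integral_const_mul, hEg, integral_const]
      have hEg2 : ∫ ω, g (X j ω)^2 ∂μ ≤ φmax^2 := by
        have := integral_mono (hg2int j) (integrable_const (φmax^2))
          (fun ω => by
            have := hφbd α (X j ω)
            nlinarith [abs_nonneg (g (X j ω)), neg_abs_le (g (X j ω)), le_abs_self (g (X j ω))])
        simpa using this
      simp only [measure_univ, probReal_univ, ENNReal.toReal_one, smul_eq_mul, one_mul]
      nlinarith [sq_nonneg (a α)]
    have hcross : ∀ j k, j ≠ k → ∫ ω, Z j ω * Z k ω ∂μ = 0 := by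
      intro j k hjk
      have hind : IndepFun (Z j) (Z k) μ :=
        (hiid.indepFun hjk).comp hζm hζm
      have := hind.integral_mul_eq_mul_integral (hZm j).aestronglyMeasurable (hZm k).aestronglyMeasurable
      calc ∫ ω, Z j ω * Z k ω ∂μ = ∫ ω, (Z j * Z k) ω ∂μ := rfl
        _ = (∫ ω, Z j ω ∂μ) * ∫ ω, Z k ω ∂μ := this
        _ = 0 := by rw [hmean j, hmean k, zero_mul]
    have hzz : ∀ ω, (a α - (1 / n : ℝ) * ∑ j, g (X j ω))^2 = ((1/n:ℝ) * ∑ j, Z j ω)^2 := by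
      intro ω
      have h1 : (1/n:ℝ) * ∑ j, Z j ω = ((1/n:ℝ) * ∑ j, g (X j ω)) - a α := by
        simp only [hZ, hζ]
        rw [Finset.sum_sub_distrib, Finset.sum_const, Finset.card_univ, Fintype.card_fin,
          nsmul_eq_mul]
        field_simp
      rw [h1]; ring
    calc ∫ ω, (a α - (1 / n : ℝ) * ∑ j, g (X j ω))^2 ∂μ
        = ∫ ω, ((1/n:ℝ) * ∑ j, Z j ω)^2 ∂μ := integral_congr_ae (Filter.Eventually.of_forall hzz)
      _ ≤ φmax^2 / n := mean_sq_sum_le μ hn Z (by positivity) hZm hbd hvar hcross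
  -- integrability of each summand
  have hsint : ∀ α ∈ M, Integrable
      (fun ω => (a α - (1 / n : ℝ) * ∑ j, ((φ α : Lp ℝ 2 ν) : Λ → ℝ) (X j ω))^2) μ := by
    intro α _
    have hgm : Measurable ((φ α : Lp ℝ 2 ν) : Λ → ℝ) :=
      (Lp.stronglyMeasurable (φ α : Lp ℝ 2 ν)).measurable
    have hφ0 : 0 ≤ φmax := le_trans (abs_nonneg _) (hφbd α (Classical.arbitrary Λ))
    refine integrable_of_abs_le ?_ (C := (|a α| + φmax)^2) fun ω => ?_
    · exact ((measurable_const.sub ((measurable_const.mul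
        (Finset.measurable_sum _ (fun j _ => hgm.comp (hmeas j))))) ).pow_const 2).aestronglyMeasurable
    · rw [abs_pow]
      refine pow_le_pow_left₀ (abs_nonneg _) ?_ 2
      calc |a α - (1 / n : ℝ) * ∑ j, ((φ α : Lp ℝ 2 ν) : Λ → ℝ) (X j ω)|
          ≤ |a α| + |(1 / n : ℝ) * ∑ j, ((φ α : Lp ℝ 2 ν) : Λ → ℝ) (X j ω)| := abs_sub _ _
        _ ≤ |a α| + φmax := by
            refine add_le_add le_rfl ?_
            rw [abs_mul]
            calc |(1/n:ℝ)| * |∑ j, ((φ α : Lp ℝ 2 ν) : Λ → ℝ) (X j ω)|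
                ≤ (1/n:ℝ) * (n * φmax) := by
                  refine mul_le_mul (le_of_eq (abs_of_nonneg (by positivity))) ?_
                    (abs_nonneg _) (by positivity)
                  calc |∑ j, ((φ α : Lp ℝ 2 ν) : Λ → ℝ) (X j ω)|
                      ≤ ∑ j, |((φ α : Lp ℝ 2 ν) : Λ → ℝ) (X j ω)| :=
                        Finset.abs_sum_le_sum_abs _ _
                    _ ≤ ∑ _j : Fin n, φmax := Finset.sum_le_sum fun j _ => hφbd α _
                    _ = n * φmax := by
                        rw [Finset.sum_const, Finset.card_univ, Fintype.card_fin, nsmul_eq_mul]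
              _ = φmax := by field_simp
  -- final assembly
  calc ∫ ω, ‖p - ∑ α ∈ M,
        ((1 / n : ℝ) * ∑ j, ((φ α : Lp ℝ 2 ν) : Λ → ℝ) (X j ω)) • (φ α : Lp ℝ 2 ν)‖ ^ 2 ∂μ
      = ∫ ω, ((∑ α ∈ M, (a α - (1 / n : ℝ) * ∑ j, ((φ α : Lp ℝ 2 ν) : Λ → ℝ) (X j ω))^2) + T) ∂μ :=
        integral_congr_ae (Filter.Eventually.of_forall hpoint)
    _ = (∑ α ∈ M, ∫ ω, (a α - (1 / n : ℝ) * ∑ j, ((φ α : Lp ℝ 2 ν) : Λ → ℝ) (X j ω))^2 ∂μ) + T := by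
        rw [integral_add (integrable_finset_sum _ hsint) (integrable_const _),
          integral_finset_sum _ hsint, integral_const]
        simp
    _ ≤ (∑ _α ∈ M, φmax^2 / n) + A / t^2 := add_le_add (Finset.sum_le_sum hterm) hT_le
    _ = M.card * φmax ^ 2 / n + A / t ^ 2 := by
        rw [Finset.sum_const, nsmul_eq_mul]
        ring
end

section
/- Let (Ω, P) be a probability space, B ≥ 0, Z : Ω → ℝ^D a random vector with ‖Z‖₂ ≤ √2 almost surely, ψ ∈ ℝ^D with ‖ψ‖₂ ≤ √2·B, ς a square-integrable real random variable, and ε a square-integrable real random variable with E[ε·Z_j] = 0 for all coordinates j. Set f = ψᵀZ + ς and Y = f + ε, and let β ∈ ℝ^D be any solution of the normal equations E[ZZᵀ]β = E[Y·Z]. Then E[(f − βᵀZ)²] ≤ E[ς²] + 4B·√(E[ς²]). -/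
open MeasureTheory

private lemma integrable_mul_of_memL2 {Ω : Type*} [MeasurableSpace Ω] {μ : Measure Ω}
    {u v : Ω → ℝ} (hu : MemLp u 2 μ) (hv : MemLp v 2 μ) :
    Integrable (fun ω => u ω * v ω) μ := by
  have h1 : Integrable (fun ω => ((u ω + v ω) ^ 2 - u ω ^ 2 - v ω ^ 2) / 2) μ :=
    (((hu.add hv).integrable_sq.sub hu.integrable_sq).sub hv.integrable_sq).div_const 2
  refine h1.congr (Filter.Eventually.of_forall fun ω => ?_)
  ring

/-- Abstract form of Lemma 4.2.  If `‖Z‖₂ ≤ √2` a.s., `‖ψ‖₂ ≤ √2 B`,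
`f = ψᵀZ + ς`, `Y = f + ε` with noise `ε` uncorrelated with the features, and `β` solves the
normal equations `E[ZZᵀ]β = E[Y Z]`, then
`E[(f − βᵀZ)²] ≤ E[ς²] + 4B √(E[ς²])`. -/
theorem optimal_linear_model_error_bound
    {Ω : Type*} [MeasurableSpace Ω] (μ : Measure Ω) [IsProbabilityMeasure μ]
    (D : ℕ) (B : ℝ) (hB : 0 ≤ B)
    (Z : Ω → Fin D → ℝ)
    (hZmeas : ∀ j, AEMeasurable (fun ω => Z ω j) μ)
    (hZbd : ∀ᵐ ω ∂μ, Real.sqrt (∑ j, Z ω j ^ 2) ≤ Real.sqrt 2)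
    (ψ : Fin D → ℝ) (hψ : Real.sqrt (∑ j, ψ j ^ 2) ≤ Real.sqrt 2 * B)
    (ς ε : Ω → ℝ) (hς : MemLp ς 2 μ) (hε : MemLp ε 2 μ)
    (hortho : ∀ j, ∫ ω, ε ω * Z ω j ∂μ = 0)
    (f Y : Ω → ℝ)
    (hf : ∀ ω, f ω = (∑ j, ψ j * Z ω j) + ς ω)
    (hY : ∀ ω, Y ω = f ω + ε ω)
    (β : Fin D → ℝ)
    (hβ : (Matrix.of fun j k => ∫ ω, Z ω j * Z ω k ∂μ).mulVec β
        = fun j => ∫ ω, Y ω * Z ω j ∂μ) :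
    ∫ ω, (f ω - ∑ j, β j * Z ω j) ^ 2 ∂μ
      ≤ (∫ ω, ς ω ^ 2 ∂μ) + 4 * B * Real.sqrt (∫ ω, ς ω ^ 2 ∂μ) := by
  -- each coordinate of Z is a.e. bounded by √2
  have hZj_bd : ∀ j, ∀ᵐ ω ∂μ, ‖Z ω j‖ ≤ Real.sqrt 2 := by
    intro j
    filter_upwards [hZbd] with ω hω
    have hsum : (0:ℝ) ≤ ∑ k, Z ω k ^ 2 := Finset.sum_nonneg fun k _ => sq_nonneg _
    have h2 : ∑ k, Z ω k ^ 2 ≤ 2 := by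
      have h22 : Real.sqrt (∑ k, Z ω k ^ 2) ≤ Real.sqrt 2 := hω
      nlinarith [Real.sq_sqrt hsum, Real.sq_sqrt (by norm_num : (0:ℝ) ≤ 2),
        Real.sqrt_nonneg (∑ k, Z ω k ^ 2)]
    have hj : Z ω j ^ 2 ≤ 2 :=
      le_trans (Finset.single_le_sum (fun k _ => sq_nonneg (Z ω k)) (Finset.mem_univ j)) h2
    calc ‖Z ω j‖ = Real.sqrt (Z ω j ^ 2) := by
          rw [Real.sqrt_sq_eq_abs]; rfl
      _ ≤ Real.sqrt 2 := Real.sqrt_le_sqrt hj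
  have hZL2 : ∀ j, MemLp (fun ω => Z ω j) 2 μ := fun j =>
    MemLp.of_bound (hZmeas j).aestronglyMeasurable (Real.sqrt 2) (hZj_bd j)
  -- f is in L²
  have hfL2 : MemLp f 2 μ := by
    have h1 : MemLp (fun ω => (∑ j, ψ j * Z ω j) + ς ω) 2 μ :=
      MemLp.add (memLp_finset_sum _ fun j _ => (hZL2 j).const_mul (ψ j)) hς
    exact h1.ae_eq (Filter.Eventually.of_forall fun ω => (hf ω).symm)
  set g : Ω → ℝ := fun ω => f ω - ∑ j, β j * Z ω j with hg_def
  clear_value g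
  have hgL2 : MemLp g 2 μ := by
    rw [hg_def]
    exact (hfL2.sub (memLp_finset_sum _ fun j _ => (hZL2 j).const_mul (β j))).ae_eq
      (Filter.Eventually.of_forall fun ω => rfl)
  -- integrability of pairwise products
  have int_fZ : ∀ j, Integrable (fun ω => f ω * Z ω j) μ := fun j =>
    integrable_mul_of_memL2 hfL2 (hZL2 j)
  have int_εZ : ∀ j, Integrable (fun ω => ε ω * Z ω j) μ := fun j =>
    integrable_mul_of_memL2 hε (hZL2 j)
  have int_ZZ : ∀ j k, Integrable (fun ω => Z ω j * Z ω k) μ := fun j k =>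
    integrable_mul_of_memL2 (hZL2 j) (hZL2 k)
  have int_gZ : ∀ j, Integrable (fun ω => g ω * Z ω j) μ := fun j =>
    integrable_mul_of_memL2 hgL2 (hZL2 j)
  have int_gς : Integrable (fun ω => g ω * ς ω) μ := integrable_mul_of_memL2 hgL2 hς
  -- the normal equations give `∫ f Z_j = ∑_k (∫ Z_j Z_k) β_k`
  have hYZ : ∀ j, ∫ ω, Y ω * Z ω j ∂μ = ∫ ω, f ω * Z ω j ∂μ := by
    intro j
    have h1 : ∀ ω, Y ω * Z ω j = f ω * Z ω j + ε ω * Z ω j := fun ω => by rw [hY]; ring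
    simp only [h1]
    rw [integral_add (int_fZ j) (int_εZ j), hortho j, add_zero]
  have hnorm : ∀ j, ∑ k, (∫ ω, Z ω j * Z ω k ∂μ) * β k = ∫ ω, f ω * Z ω j ∂μ := by
    intro j
    have := congrFun hβ j
    simp only [Matrix.mulVec, dotProduct, Matrix.of_apply] at this
    rw [this, hYZ j]
  -- orthogonality: `∫ g Z_j = 0`
  have hgZ : ∀ j, ∫ ω, g ω * Z ω j ∂μ = 0 := by
    intro j
    have h1 : ∀ ω, g ω * Z ω j = f ω * Z ω j - ∑ k, β k * (Z ω j * Z ω k) := by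
      intro ω
      simp only [hg_def, sub_mul, Finset.sum_mul]
      congr 1
      exact Finset.sum_congr rfl fun k _ => by ring
    simp only [h1]
    rw [integral_sub (int_fZ j)
      (integrable_finset_sum _ fun k _ => (int_ZZ j k).const_mul (β k)),
      integral_finset_sum _ fun k _ => (int_ZZ j k).const_mul (β k)]
    have h2 : ∀ k, ∫ ω, β k * (Z ω j * Z ω k) ∂μ = (∫ ω, Z ω j * Z ω k ∂μ) * β k := by
      intro k
      rw [integral_const_mul]; ring
    simp only [h2]
    rw [hnorm j, sub_self]
  -- key identity: `∫ g² = ∫ g ς`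
  have hg_expand : ∀ ω, g ω = (∑ j, (ψ j - β j) * Z ω j) + ς ω := by
    intro ω
    simp only [hg_def, hf, sub_mul, Finset.sum_sub_distrib]
    ring
  have hpt : ∀ ω, g ω ^ 2 = (∑ j, (ψ j - β j) * (g ω * Z ω j)) + g ω * ς ω := by
    intro ω
    rw [sq]
    nth_rewrite 2 [hg_expand ω]
    rw [mul_add, Finset.mul_sum]
    congr 1
    exact Finset.sum_congr rfl fun j _ => by ring
  have hkey : ∫ ω, g ω ^ 2 ∂μ = ∫ ω, g ω * ς ω ∂μ := by
    simp only [hpt]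
    rw [integral_add (integrable_finset_sum _ fun j _ => (int_gZ j).const_mul _) int_gς,
      integral_finset_sum _ fun j _ => (int_gZ j).const_mul _]
    have h3 : ∀ j, ∫ ω, (ψ j - β j) * (g ω * Z ω j) ∂μ = 0 := by
      intro j
      rw [integral_const_mul, hgZ j, mul_zero]
    simp [h3]
  -- `∫ g ς ≤ (∫ g² + ∫ ς²)/2`, hence `∫ g² ≤ ∫ ς²`
  have hmono : ∫ ω, g ω * ς ω ∂μ ≤ ∫ ω, (g ω ^ 2 + ς ω ^ 2) / 2 ∂μ := by
    refine integral_mono int_gς ((hgL2.integrable_sq.add hς.integrable_sq).div_const 2)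
      fun ω => ?_
    have h := sq_nonneg (g ω - ς ω)
    have h2 : (g ω - ς ω) ^ 2 = g ω ^ 2 - 2 * (g ω * ς ω) + ς ω ^ 2 := by ring
    show g ω * ς ω ≤ (g ω ^ 2 + ς ω ^ 2) / 2
    linarith
  have hsplit : ∫ ω, (g ω ^ 2 + ς ω ^ 2) / 2 ∂μ
      = ((∫ ω, g ω ^ 2 ∂μ) + ∫ ω, ς ω ^ 2 ∂μ) / 2 := by
    rw [integral_div, integral_add hgL2.integrable_sq hς.integrable_sq]
  have hAC : ∫ ω, g ω ^ 2 ∂μ ≤ ∫ ω, ς ω ^ 2 ∂μ := by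
    linarith [hkey, hmono, hsplit]
  have hCnn : 0 ≤ Real.sqrt (∫ ω, ς ω ^ 2 ∂μ) := Real.sqrt_nonneg _
  have : 0 ≤ 4 * B * Real.sqrt (∫ ω, ς ω ^ 2 ∂μ) := by positivity
  have hAC' : ∫ ω, (f ω - ∑ j, β j * Z ω j) ^ 2 ∂μ ≤ ∫ ω, ς ω ^ 2 ∂μ := by
    rw [hg_def] at hAC; simpa using hAC
  linarith
end
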